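/- arXiv:1603.05738 — 2 statements merged into one kernel-verified Lean document; each statement's English description precedes it below -/
import Mathlib

section
/- (Theorem 3, feasibility rate) Let σ > 0 and α ∈ (1/2, 1], and suppose the tolerance sequence is η_k = σ/k^{2α} for all k ≥ 1. Then for all k ≥ 1: ‖Ax^{k+1} − b‖² ≤ ψ_k := (2/β)·(C + √σ)/k^α, where C := 4√(3((3/2)θσ + 1)σ/θ) + (4/3)·max{δ₁, 4/θ}. -/
/-! Each approximate AL step is an inexact proximal-point step on the concave dual `d`. Writing
`r = Ax⁺ − b`, strong convexity of the penalty along `A` shows that the step raises `d` by at least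
`β‖r‖²/2 − η`, that `d λ* − d λ ≤ η + ⟪λ* − λ, r⟫`, and that `‖λ − λ*‖²` decreases up to `2βη`; the
last fact keeps every multiplier within distance `B` of `λ*`. Combining the first two with
Cauchy–Schwarz, the dual gap obeys `δ_{k+1} ≤ δ_k + η_k − 2θ(δ_k − η_k)²`, and for
`η_k = σ/k^{2α}` an induction gives `δ_k ≤ (C − σ)/k^α`. The residual bound follows from
`β‖r_k‖²/2 ≤ δ_k − δ_{k+1} + η_k`. -/

open RealInnerProductSpace Set

theorem ConvexOn.inner_sub_le_of_hasGradientAt {E : Type*} [NormedAddCommGroup E]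
    [InnerProductSpace ℝ E] [CompleteSpace E] {f : E → ℝ} (hf : ConvexOn ℝ univ f) {x G : E}
    (hG : HasGradientAt f G x) (y : E) : ⟪G, y - x⟫ ≤ f y - f x := by
  have hline : HasDerivAt (f ∘ AffineMap.lineMap (k := ℝ) x y) ⟪G, y - x⟫ 0 := by
    have hG' : HasFDerivAt f (InnerProductSpace.toDual ℝ E G)
        (AffineMap.lineMap (k := ℝ) x y 0) := by
      simpa using hG.hasFDerivAt
    simpa using hG'.comp_hasDerivAt (0 : ℝ) AffineMap.hasDerivAt_lineMap
  simpa [slope_def_field] using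
    (hf.comp_affineMap (AffineMap.lineMap (k := ℝ) x y)).le_slope_of_hasDerivAt
      (mem_univ 0) (mem_univ 1) zero_lt_one hline

theorem neg_norm_sq_div_le_inner_add {F : Type*} [NormedAddCommGroup F] [InnerProductSpace ℝ F]
    {β : ℝ} (hβ : 0 < β) (v w : F) : -(‖v‖ ^ 2 / (2 * β)) ≤ ⟪v, w⟫ + β / 2 * ‖w‖ ^ 2 := by
  have h := norm_add_sq_real v (β • w)
  rw [inner_smul_right, norm_smul, Real.norm_of_nonneg hβ.le] at h
  rw [neg_le, le_div_iff₀ (by positivity)]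
  nlinarith [sq_nonneg ‖v + β • w‖]

section AugmentedLagrangian

variable {E F : Type*} [NormedAddCommGroup E] [InnerProductSpace ℝ E]
  [NormedAddCommGroup F] [InnerProductSpace ℝ F]
  (A : E →L[ℝ] F) (b : F) (f' : E → E) (f g : E → ℝ) (β : ℝ)

noncomputable def augLagrangian (x : E) (μ : F) : ℝ :=
  f x + ⟪μ, A x - b⟫ + β / 2 * ‖A x - b‖ ^ 2 + g x

variable {A b f g β} in
theorem augLagrangian_eq_add_inner (x : E) (μ ν : F) :
    augLagrangian A b f g β x μ = augLagrangian A b f g β x ν + ⟪μ - ν, A x - b⟫ := by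
  simp only [augLagrangian, inner_sub_left]
  ring

def IsALDual (d : F → ℝ) : Prop :=
  ∀ ν, IsLeast (range fun x => augLagrangian A b f g β x ν) (d ν)

variable [CompleteSpace E] [CompleteSpace F]

def IsApproxALMin (η : ℝ) (μ : F) (xp : E) : Prop :=
  ∀ y, ⟪f' xp + A.adjoint (μ + β • (A xp - b)), xp - y⟫ + g xp - g y ≤ η

variable {A b f' f g β}

namespace IsApproxALMin

variable {d : F → ℝ} {η : ℝ} {μ : F} {xp : E}

theorem augLagrangian_le (hf : ConvexOn ℝ univ f) (hf' : ∀ x, HasGradientAt f (f' x) x)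
    (hx : IsApproxALMin A b f' g β η μ xp) (y : E) :
    augLagrangian A b f g β xp μ - η + β / 2 * ‖A y - A xp‖ ^ 2 ≤ augLagrangian A b f g β y μ := by
  have hgrad := hf.inner_sub_le_of_hasGradientAt (hf' xp) y
  have happrox := hx y
  have hsplit : A y - b = (A xp - b) + (A y - A xp) := by abel
  have hadj : ⟪A.adjoint (μ + β • (A xp - b)), xp - y⟫
      = -⟪μ + β • (A xp - b), A y - A xp⟫ := by
    rw [ContinuousLinearMap.adjoint_inner_left, map_sub, ← inner_neg_right, neg_sub]
  rw [inner_add_left, hadj, ← neg_sub y xp, inner_neg_right, inner_add_left,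
    real_inner_smul_left] at happrox
  simp only [augLagrangian, hsplit, inner_add_right, norm_add_sq_real]
  nlinarith [hgrad, happrox]

theorem sub_le_dual (hf : ConvexOn ℝ univ f) (hf' : ∀ x, HasGradientAt f (f' x) x)
    (hd : IsALDual A b f g β d) (hβ : 0 < β)
    (hx : IsApproxALMin A b f' g β η μ xp) (ν : F) :
    augLagrangian A b f g β xp ν - η - ‖ν - μ‖ ^ 2 / (2 * β) ≤ d ν := by
  obtain ⟨y, hy : augLagrangian A b f g β y ν = d ν⟩ := (hd ν).1
  have hL := hx.augLagrangian_le hf hf' y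
  rw [← hy, augLagrangian_eq_add_inner xp ν μ, augLagrangian_eq_add_inner y ν μ]
  have hsplit : A y - b = (A xp - b) + (A y - A xp) := by abel
  have := neg_norm_sq_div_le_inner_add hβ (ν - μ) (A y - A xp)
  rw [hsplit, inner_add_right]
  linarith

theorem augLagrangian_le_dual_add (hf : ConvexOn ℝ univ f)
    (hf' : ∀ x, HasGradientAt f (f' x) x) (hd : IsALDual A b f g β d) (hβ : 0 < β)
    (hx : IsApproxALMin A b f' g β η μ xp) :
    augLagrangian A b f g β xp μ ≤ d μ + η := by
  have h := hx.sub_le_dual hf hf' hd hβ μ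
  rw [sub_self, norm_zero, zero_pow two_ne_zero, zero_div, sub_zero] at h
  linarith

variable {μ' : F}

theorem augLagrangian_sub_le_dual_succ (hf : ConvexOn ℝ univ f)
    (hf' : ∀ x, HasGradientAt f (f' x) x) (hd : IsALDual A b f g β d) (hβ : 0 < β)
    (hx : IsApproxALMin A b f' g β η μ xp) (hμ' : μ' = μ + β • (A xp - b)) :
    augLagrangian A b f g β xp μ' - η - β / 2 * ‖A xp - b‖ ^ 2 ≤ d μ' := by
  have h := hx.sub_le_dual hf hf' hd hβ μ'
  have hβsq : ‖μ' - μ‖ ^ 2 / (2 * β) = β / 2 * ‖A xp - b‖ ^ 2 := by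
    rw [hμ', add_sub_cancel_left, norm_smul, Real.norm_of_nonneg hβ.le]
    field_simp
  linarith

theorem dual_add_le (hf : ConvexOn ℝ univ f) (hf' : ∀ x, HasGradientAt f (f' x) x)
    (hd : IsALDual A b f g β d) (hβ : 0 < β)
    (hx : IsApproxALMin A b f' g β η μ xp) (hμ' : μ' = μ + β • (A xp - b)) :
    d μ + β / 2 * ‖A xp - b‖ ^ 2 - η ≤ d μ' := by
  have h := hx.augLagrangian_sub_le_dual_succ hf hf' hd hβ hμ'
  have hdμ : d μ ≤ augLagrangian A b f g β xp μ := (hd μ).2 ⟨xp, rfl⟩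
  subst hμ'
  rw [augLagrangian_eq_add_inner xp _ μ, add_sub_cancel_left, real_inner_smul_left,
    real_inner_self_eq_norm_sq] at h
  linarith

theorem dual_sub_le (hf : ConvexOn ℝ univ f) (hf' : ∀ x, HasGradientAt f (f' x) x)
    (hd : IsALDual A b f g β d) (hβ : 0 < β)
    (hx : IsApproxALMin A b f' g β η μ xp) (ν : F) :
    d ν - d μ ≤ η + ⟪ν - μ, A xp - b⟫ := by
  have hdν : d ν ≤ augLagrangian A b f g β xp ν := (hd ν).2 ⟨xp, rfl⟩
  rw [augLagrangian_eq_add_inner xp ν μ] at hdν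
  linarith [hx.augLagrangian_le_dual_add hf hf' hd hβ]

theorem norm_sub_sq_add_dual_le (hf : ConvexOn ℝ univ f) (hf' : ∀ x, HasGradientAt f (f' x) x)
    (hd : IsALDual A b f g β d) (hβ : 0 < β)
    (hx : IsApproxALMin A b f' g β η μ xp) (hμ' : μ' = μ + β • (A xp - b)) (ν : F) :
    ‖μ' - ν‖ ^ 2 + 2 * β * (d ν - d μ') ≤ ‖μ - ν‖ ^ 2 + 2 * β * η := by
  have h := hx.augLagrangian_sub_le_dual_succ hf hf' hd hβ hμ'
  have hdν : d ν ≤ augLagrangian A b f g β xp ν := (hd ν).2 ⟨xp, rfl⟩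
  subst hμ'
  have hsplit : μ + β • (A xp - b) - ν = (μ - ν) + β • (A xp - b) := by abel
  have hneg : ν - (μ + β • (A xp - b)) = -((μ - ν) + β • (A xp - b)) := by abel
  rw [augLagrangian_eq_add_inner xp ν (μ + β • (A xp - b)), hneg, inner_neg_left,
    inner_add_left, real_inner_smul_left, real_inner_self_eq_norm_sq] at hdν
  have hgap : d ν - d (μ + β • (A xp - b)) ≤ η - β / 2 * ‖A xp - b‖ ^ 2 - ⟪μ - ν, A xp - b⟫ := by
    linarith
  rw [hsplit, norm_add_sq_real, norm_smul, real_inner_smul_right, Real.norm_of_nonneg hβ.le]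
  nlinarith [mul_le_mul_of_nonneg_left hgap (by positivity : (0 : ℝ) ≤ 2 * β)]

theorem dual_gap_succ_le (hf : ConvexOn ℝ univ f) (hf' : ∀ x, HasGradientAt f (f' x) x)
    (hd : IsALDual A b f g β d) (hβ : 0 < β)
    (hx : IsApproxALMin A b f' g β η μ xp) (hμ' : μ' = μ + β • (A xp - b)) {ν : F} {B θ : ℝ}
    (hB : ‖μ - ν‖ ≤ B) (hθ : 0 ≤ θ) (hθB : 4 * θ * B ^ 2 ≤ β) (hgap : η ≤ d ν - d μ) :
    d ν - d μ' ≤ d ν - d μ + η - 2 * θ * (d ν - d μ - η) ^ 2 := by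
  have hasc := hx.dual_add_le hf hf' hd hβ hμ'
  have hsub := hx.dual_sub_le hf hf' hd hβ ν
  have hcs : ⟪ν - μ, A xp - b⟫ ≤ B * ‖A xp - b‖ :=
    (real_inner_le_norm _ _).trans (by rw [norm_sub_rev]; gcongr)
  have hsq : (d ν - d μ - η) ^ 2 ≤ (B * ‖A xp - b‖) ^ 2 := by
    gcongr
    linarith
  nlinarith [mul_le_mul_of_nonneg_left hsq hθ, sq_nonneg ‖A xp - b‖]

end IsApproxALMin

variable (A b f' g β) in
structure IsIALIterates (η : ℕ → ℝ) (x : ℕ → E) (lam : ℕ → F) : Prop where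
  approx : ∀ k, 1 ≤ k → IsApproxALMin A b f' g β (η k) (lam k) (x (k + 1))
  update : ∀ k, 1 ≤ k → lam (k + 1) = lam k + β • (A (x (k + 1)) - b)

theorem IsIALIterates.norm_sub_le_sqrt {d : F → ℝ} {η : ℕ → ℝ} {x : ℕ → E} {lam : ℕ → F}
    (hf : ConvexOn ℝ univ f) (hf' : ∀ x, HasGradientAt f (f' x) x)
    (hd : IsALDual A b f g β d) (hβ : 0 < β) (hit : IsIALIterates A b f' g β η x lam)
    {lamstar : F} (hstar : ∀ μ, d μ ≤ d lamstar)
    (hη : ∀ k, 0 ≤ η (k + 1)) (hsum : Summable fun k => η (k + 1)) :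
    ∀ k, 1 ≤ k → ‖lam k - lamstar‖ ≤ √(‖lam 1 - lamstar‖ ^ 2 + 2 * β * ∑' k, η (k + 1)) := by
  have hpartial : ∀ i, ‖lam (i + 1) - lamstar‖ ^ 2
      ≤ ‖lam 1 - lamstar‖ ^ 2 + 2 * β * ∑ t ∈ Finset.range i, η (t + 1) := by
    intro i
    induction i with
    | zero => simp
    | succ i ih =>
      have hstep := (hit.approx (i + 1) (by omega)).norm_sub_sq_add_dual_le hf hf' hd hβ
        (hit.update (i + 1) (by omega)) lamstar
      have hgap : 0 ≤ 2 * β * (d lamstar - d (lam (i + 1 + 1))) :=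
        mul_nonneg (by positivity) (sub_nonneg.2 (hstar _))
      rw [Finset.sum_range_succ, mul_add]
      linarith
  intro k hk
  obtain ⟨i, rfl⟩ := Nat.exists_eq_add_of_le' hk
  have := hsum.sum_le_tsum (Finset.range i) fun t _ => hη t
  exact Real.le_sqrt_of_sq_le (by nlinarith [hpartial i])

end AugmentedLagrangian

theorem le_two_mul_add_one_div_of_gap_step {θ η d d' : ℝ} (hθ : 0 < θ) (h1 : d' ≤ d + η)
    (h2 : η ≤ d → d' ≤ d + η - 2 * θ * (d - η) ^ 2) : d' ≤ 2 * η + 1 / (8 * θ) := by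
  have hpos : 0 < 1 / (8 * θ) := by positivity
  by_cases hd : η ≤ d
  · have hvertex : (d - η) - 2 * θ * (d - η) ^ 2 ≤ 1 / (8 * θ) := by
      rw [le_div_iff₀ (by positivity)]
      nlinarith [sq_nonneg (4 * θ * (d - η) - 1)]
    linarith [h2 hd]
  · linarith

theorem le_of_gap_step_of_le {θ η d d' U : ℝ} (hθ : 0 ≤ θ) (hdU : d ≤ U) (hηU : η ≤ U)
    (hU : 4 * θ * (U - η) ≤ 1) (h1 : d' ≤ d + η)
    (h2 : η ≤ d → d' ≤ d + η - 2 * θ * (d - η) ^ 2) : d' ≤ U + η - 2 * θ * (U - η) ^ 2 := by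
  by_cases hd : η ≤ d
  · have hmono : 0 ≤ 1 - 2 * θ * (U + d - 2 * η) := by nlinarith
    nlinarith [h2 hd, mul_nonneg (sub_nonneg.2 hdU) hmono]
  · nlinarith [mul_le_mul_of_nonneg_left hU (sub_nonneg.2 hηU)]

section GapArithmetic

variable {θ σ M K : ℝ}

theorem add_sub_two_mul_sq_le_div_add_one (hθ : 0 < θ) (hσ : 0 < σ)
    (hM : 7 * σ + 16 / (3 * θ) ≤ M) (hK : 1 ≤ K) :
    M / K + σ / K ^ 2 - 2 * θ * (M / K - σ / K ^ 2) ^ 2 ≤ M / (K + 1) := by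
  have hK0 : 0 < K := by linarith
  have hM7 : 7 * σ ≤ M := by linarith [show 0 < 16 / (3 * θ) by positivity]
  have hθM : 16 / 3 ≤ θ * (M - σ) := by
    have : 16 / (3 * θ) ≤ M - σ := by linarith
    rw [div_le_iff₀ (by positivity)] at this
    linarith
  have hu : (M - σ) / K ≤ M / K - σ / K ^ 2 := by
    rw [sub_div]
    linarith [div_le_div_of_nonneg_left hσ.le hK0 (by nlinarith : K ≤ K ^ 2)]
  have hdiff : M / K - M / (K + 1) ≤ M / K ^ 2 := by
    rw [div_sub_div _ _ hK0.ne' (by positivity), div_le_div_iff₀ (by positivity) (by positivity)]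
    nlinarith
  have hquad : (M + σ) / K ^ 2 ≤ 2 * θ * ((M - σ) / K) ^ 2 := by
    rw [div_pow, ← mul_div_assoc]
    gcongr
    nlinarith [mul_le_mul_of_nonneg_right hθM (by linarith : 0 ≤ M - σ)]
  have hsq : ((M - σ) / K) ^ 2 ≤ (M / K - σ / K ^ 2) ^ 2 := by
    gcongr
    exact div_nonneg (by linarith) hK0.le
  rw [add_div] at hquad
  nlinarith

theorem two_mul_add_one_div_le_div_add_one (hθ : 0 < θ) (hσ : 0 < σ)
    (hM : 7 * σ + 16 / (3 * θ) ≤ M) (hK : 1 ≤ K) (hU : 1 < 4 * θ * (M / K - σ / K ^ 2)) :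
    2 * (σ / K ^ 2) + 1 / (8 * θ) ≤ M / (K + 1) := by
  have hM7 : 7 * σ ≤ M := by linarith [show 0 < 16 / (3 * θ) by positivity]
  rcases le_or_gt K 2 with hK2 | hK2
  · have hvert : 1 / (8 * θ) ≤ 3 / 128 * (M - 7 * σ) := by
      have : 16 / (3 * θ) ≤ M - 7 * σ := by linarith
      rw [div_le_iff₀ (by positivity)] at this
      rw [div_le_iff₀ (by positivity)]
      nlinarith
    have hσ2 : σ / K ^ 2 ≤ σ := div_le_self hσ.le (by nlinarith)
    have hM3 : M / 3 ≤ M / (K + 1) :=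
      div_le_div_of_nonneg_left (by linarith) (by positivity) (by linarith)
    linarith
  · have hvert : 1 / (8 * θ) ≤ (M / K - σ / K ^ 2) / 2 := by
      rw [div_le_iff₀ (by positivity)]
      linarith
    have hsum : 2 * (σ / K ^ 2) + (M / K - σ / K ^ 2) / 2 = (3 * σ + M * K) / (2 * K ^ 2) := by
      field_simp
      ring
    have hfinal : (3 * σ + M * K) / (2 * K ^ 2) ≤ M / (K + 1) := by
      rw [div_le_div_iff₀ (by positivity) (by positivity)]
      nlinarith [mul_le_mul_of_nonneg_left (show 3 * (K + 1) ≤ 7 * K * (K - 1) by nlinarith) hσ.le,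
        mul_le_mul_of_nonneg_right hM7 (by nlinarith : 0 ≤ K * (K - 1))]
    linarith

theorem gap_step_le_div {K' d d' : ℝ} (hθ : 0 < θ) (hσ : 0 < σ)
    (hM : 7 * σ + 16 / (3 * θ) ≤ M) (hK : 1 ≤ K) (hKK' : K ≤ K') (hK' : K' ≤ K + 1)
    (hd : d ≤ M / K) (h1 : d' ≤ d + σ / K ^ 2)
    (h2 : σ / K ^ 2 ≤ d → d' ≤ d + σ / K ^ 2 - 2 * θ * (d - σ / K ^ 2) ^ 2) :
    d' ≤ M / K' := by
  have hK0 : 0 < K := by linarith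
  have hσM : σ ≤ M := by linarith [show 0 < 16 / (3 * θ) by positivity]
  have hηU : σ / K ^ 2 ≤ M / K :=
    (div_le_div_of_nonneg_left hσ.le hK0 (by nlinarith)).trans (by gcongr)
  refine le_trans ?_ (div_le_div_of_nonneg_left (by linarith) (by linarith) hK')
  -- Below the vertex of `t ↦ t + η − 2θ(t − η)²` the step is monotone in `d`; beyond it, the
  -- vertex value `2η + 1/(8θ)` bounds it.
  by_cases hU : 4 * θ * (M / K - σ / K ^ 2) ≤ 1
  · exact (le_of_gap_step_of_le hθ.le hd hηU hU h1 h2).trans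
      (add_sub_two_mul_sq_le_div_add_one hθ hσ hM hK)
  · exact (le_two_mul_add_one_div_of_gap_step hθ h1 h2).trans
      (two_mul_add_one_div_le_div_add_one hθ hσ hM hK (not_le.1 hU))

end GapArithmetic

theorem summable_of_eq_div_rpow {σ α : ℝ} {η : ℕ → ℝ} (hα : 1 / 2 < α)
    (hη : ∀ k, 1 ≤ k → η k = σ / (k : ℝ) ^ (2 * α)) : Summable fun k => η (k + 1) := by
  have hp := (Real.summable_one_div_nat_rpow (p := 2 * α)).2 (by linarith)
  refine ((summable_nat_add_iff 1).2 (hp.mul_left σ)).congr fun k => ?_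
  rw [hη _ k.succ_pos]
  push_cast
  ring

theorem le_div_rpow_of_gap_recursion {θ σ M α : ℝ} (hθ : 0 < θ) (hσ : 0 < σ) (hα : 0 < α)
    (hα1 : α ≤ 1) (hM : 7 * σ + 16 / (3 * θ) ≤ M) {δ η : ℕ → ℝ}
    (hη : ∀ k, 1 ≤ k → η k = σ / (k : ℝ) ^ (2 * α)) (h1 : δ 1 ≤ M)
    (hdesc : ∀ k, 1 ≤ k → δ (k + 1) ≤ δ k + η k)
    (hcontr : ∀ k, 1 ≤ k → η k ≤ δ k → δ (k + 1) ≤ δ k + η k - 2 * θ * (δ k - η k) ^ 2) :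
    ∀ k, 1 ≤ k → δ k ≤ M / (k : ℝ) ^ α := by
  intro k hk
  induction k, hk using Nat.le_induction with
  | base => simpa using h1
  | succ k hk ih =>
    have hk1 : (1 : ℝ) ≤ k := by exact_mod_cast hk
    have hηk : η k = σ / ((k : ℝ) ^ α) ^ 2 := by
      rw [hη k hk, ← Real.rpow_mul_natCast (by positivity), mul_comm]
      norm_num
    have hstep : ((k : ℝ) + 1) ^ α ≤ (k : ℝ) ^ α + 1 := by
      simpa using Real.rpow_add_le_add_rpow (by positivity) zero_le_one hα.le hα1
    push_cast
    exact gap_step_le_div hθ hσ hM (Real.one_le_rpow hk1 hα.le)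
      (Real.rpow_le_rpow (by positivity) (by linarith) hα.le) hstep ih
      (hηk ▸ hdesc k hk) (hηk ▸ hcontr k hk)

theorem le_sub_of_eq_feasibility_constant {θ σ D C : ℝ} (hθ : 0 < θ) (hσ : 0 < σ)
    (hC : C = 4 * Real.sqrt (3 * (3 / 2 * θ * σ + 1) * σ / θ) + 4 / 3 * max D (4 / θ)) :
    7 * σ + 16 / (3 * θ) ≤ C - σ ∧ D ≤ C - σ := by
  have hP : 2 * σ ≤ Real.sqrt (3 * (3 / 2 * θ * σ + 1) * σ / θ) := by
    rw [Real.le_sqrt (by positivity) (by positivity), le_div_iff₀ hθ]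
    nlinarith [mul_pos hθ (mul_pos hσ hσ)]
  have hD := le_max_left D (4 / θ)
  have hθD := le_max_right D (4 / θ)
  have h4θ : 0 < 4 / θ := by positivity
  constructor <;> linarith [show 16 / (3 * θ) = 4 / 3 * (4 / θ) by field_simp; ring]

theorem ial_feasibility_rate_general
    {n m : ℕ}
    (A : EuclideanSpace ℝ (Fin n) →L[ℝ] EuclideanSpace ℝ (Fin m))
    (b : EuclideanSpace ℝ (Fin m))
    (f g : EuclideanSpace ℝ (Fin n) → ℝ)
    (f' : EuclideanSpace ℝ (Fin n) → EuclideanSpace ℝ (Fin n))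
    (hf : ConvexOn ℝ Set.univ f)
    (hf' : ∀ x, HasGradientAt f (f' x) x)
    (β : ℝ) (hβ : 0 < β)
    (L : EuclideanSpace ℝ (Fin n) → EuclideanSpace ℝ (Fin m) → ℝ)
    (hL : ∀ x lam, L x lam
        = f x + ⟪lam, A x - b⟫ + β / 2 * ‖A x - b‖ ^ 2 + g x)
    (d : EuclideanSpace ℝ (Fin m) → ℝ)
    (hd : ∀ lam, IsLeast (Set.range fun x => L x lam) (d lam))
    (x : ℕ → EuclideanSpace ℝ (Fin n))
    (lam : ℕ → EuclideanSpace ℝ (Fin m))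
    (σ α : ℝ) (hσ : 0 < σ) (hα : 1 / 2 < α ∧ α ≤ 1)
    (η : ℕ → ℝ)
    (hη : ∀ k, 1 ≤ k → η k = σ / (k : ℝ) ^ (2 * α))
    (happrox : ∀ k, 1 ≤ k → ∀ y,
        ⟪f' (x (k + 1)) + A.adjoint (lam k + β • (A (x (k + 1)) - b)), x (k + 1) - y⟫
          + g (x (k + 1)) - g y ≤ η k)
    (hlam : ∀ k, 1 ≤ k → lam (k + 1) = lam k + β • (A (x (k + 1)) - b))
    (lamstar : EuclideanSpace ℝ (Fin m))
    (hstar : ∀ μ, d μ ≤ d lamstar)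
    (δ : ℕ → ℝ)
    (hδ : ∀ k, δ k = d lamstar - d (lam k))
    (B : ℝ)
    (hB : B = Real.sqrt (‖lam 1 - lamstar‖ ^ 2 + 2 * β * ∑' k : ℕ, η (k + 1)))
    (θ : ℝ)
    (hθ : θ = β / (4 * B ^ 2))
    (C : ℝ)
    (hC : C = 4 * Real.sqrt (3 * (3 / 2 * θ * σ + 1) * σ / θ)
        + 4 / 3 * max (δ 1) (4 / θ)) :
    ∀ k, 1 ≤ k → ‖A (x (k + 1)) - b‖ ^ 2 ≤ 2 / β * ((C + Real.sqrt σ) / (k : ℝ) ^ α) := by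
  obtain ⟨hα, hα1⟩ := hα
  obtain rfl : L = augLagrangian A b f g β := funext fun y => funext (hL y)
  obtain rfl : δ = fun k => d lamstar - d (lam k) := funext hδ
  have hit : IsIALIterates A b f' g β η x lam := ⟨happrox, hlam⟩
  have hη0 : ∀ k, 0 ≤ η (k + 1) := fun k => by rw [hη _ k.succ_pos]; positivity
  have hsum := summable_of_eq_div_rpow hα hη
  have hB0 : 0 < B := by
    have hση : σ ≤ ∑' k, η (k + 1) := by
      simpa [hη 1 le_rfl] using hsum.le_tsum 0 fun k _ => hη0 k
    exact hB ▸ Real.sqrt_pos.2 (by nlinarith [sq_nonneg ‖lam 1 - lamstar‖, mul_pos hβ hσ])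
  have hθ0 : 0 < θ := by rw [hθ]; positivity
  have hθB : 4 * θ * B ^ 2 = β := by rw [hθ]; field_simp
  have hdesc (k : ℕ) (hk : 1 ≤ k) :=
    (hit.approx k hk).dual_add_le hf hf' hd hβ (hit.update k hk)
  have hcontr (k : ℕ) (hk : 1 ≤ k) :=
    (hit.approx k hk).dual_gap_succ_le hf hf' hd hβ (hit.update k hk)
      (hB ▸ hit.norm_sub_le_sqrt hf hf' hd hβ hstar hη0 hsum k hk) hθ0.le hθB.le
  obtain ⟨hM, h1⟩ := le_sub_of_eq_feasibility_constant hθ0 hσ hC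
  have hrate := le_div_rpow_of_gap_recursion (δ := fun k => d lamstar - d (lam k)) hθ0 hσ
    (by linarith) hα1 hM hη h1
    (fun k hk => by nlinarith [hdesc k hk, sq_nonneg ‖A (x (k + 1)) - b‖]) hcontr
  intro k hk
  have hηk : η k ≤ σ / (k : ℝ) ^ α := by
    rw [hη k hk]
    gcongr
    exacts [Nat.one_le_cast.2 hk, by linarith]
  have hres : β / 2 * ‖A (x (k + 1)) - b‖ ^ 2 ≤ (C - σ) / (k : ℝ) ^ α + σ / (k : ℝ) ^ α := by
    linarith [hdesc k hk, hstar (lam (k + 1)), hrate k hk]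
  rw [← add_div, sub_add_cancel] at hres
  calc ‖A (x (k + 1)) - b‖ ^ 2 = 2 / β * (β / 2 * ‖A (x (k + 1)) - b‖ ^ 2) := by field_simp
    _ ≤ 2 / β * ((C + Real.sqrt σ) / (k : ℝ) ^ α) := by
      gcongr
      exact hres.trans (by gcongr; linarith [Real.sqrt_nonneg σ])

/-- **Theorem 3 (feasibility rate).**
Let `σ > 0`, `α ∈ (1/2, 1]`, and `η_k = σ/k^{2α}` for all `k ≥ 1`. Then for all `k ≥ 1`:
`‖Ax^{k+1} − b‖² ≤ ψ_k := (2/β)(C + √σ)/k^α`, where `C := 4√(3((3/2)θσ + 1)σ/θ) + (4/3)·max{δ₁, 4/θ}`. -/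
theorem ial_feasibility_rate
    {n m : ℕ}
    (A : EuclideanSpace ℝ (Fin n) →L[ℝ] EuclideanSpace ℝ (Fin m))
    (b : EuclideanSpace ℝ (Fin m))
    (f g : EuclideanSpace ℝ (Fin n) → ℝ)
    (f' : EuclideanSpace ℝ (Fin n) → EuclideanSpace ℝ (Fin n))
    (hf : ConvexOn ℝ Set.univ f)
    (hf' : ∀ x, HasGradientAt f (f' x) x)
    (hg : ConvexOn ℝ Set.univ g)
    (β : ℝ) (hβ : 0 < β)
    (L : EuclideanSpace ℝ (Fin n) → EuclideanSpace ℝ (Fin m) → ℝ)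
    (hL : ∀ x lam, L x lam
        = f x + ⟪lam, A x - b⟫ + β / 2 * ‖A x - b‖ ^ 2 + g x)
    (d : EuclideanSpace ℝ (Fin m) → ℝ)
    (hd : ∀ lam, IsLeast (Set.range fun x => L x lam) (d lam))
    (x : ℕ → EuclideanSpace ℝ (Fin n))
    (lam : ℕ → EuclideanSpace ℝ (Fin m))
    (σ α : ℝ) (hσ : 0 < σ) (hα : 1 / 2 < α ∧ α ≤ 1)
    (η : ℕ → ℝ)
    (hη : ∀ k, 1 ≤ k → η k = σ / (k : ℝ) ^ (2 * α))
    (happrox : ∀ k, 1 ≤ k → ∀ y,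
        ⟪f' (x (k + 1)) + A.adjoint (lam k + β • (A (x (k + 1)) - b)), x (k + 1) - y⟫
          + g (x (k + 1)) - g y ≤ η k)
    (hlam : ∀ k, 1 ≤ k → lam (k + 1) = lam k + β • (A (x (k + 1)) - b))
    (lamstar : EuclideanSpace ℝ (Fin m))
    (hstar : ∀ μ, d μ ≤ d lamstar)
    (δ : ℕ → ℝ)
    (hδ : ∀ k, δ k = d lamstar - d (lam k))
    (B : ℝ)
    (hB : B = Real.sqrt (‖lam 1 - lamstar‖ ^ 2 + 2 * β * ∑' k : ℕ, η (k + 1)))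
    (θ : ℝ)
    (hθ : θ = β / (4 * B ^ 2))
    (C : ℝ)
    (hC : C = 4 * Real.sqrt (3 * (3 / 2 * θ * σ + 1) * σ / θ)
        + 4 / 3 * max (δ 1) (4 / θ)) :
    ∀ k, 1 ≤ k → ‖A (x (k + 1)) - b‖ ^ 2 ≤ 2 / β * ((C + Real.sqrt σ) / (k : ℝ) ^ α) :=
  ial_feasibility_rate_general A b f g f' hf hf' β hβ L hL d hd x lam σ α hσ hα η hη happrox hlam
    lamstar hstar δ hδ B hB θ hθ C hC
end

section
/- (Lemma 3, boundedness of dual iterates) Suppose the nonnegative tolerance sequence {η_k} is summable. Then for every k ≥ 1: ‖λ^k − λ*‖ ≤ B, where B := √(‖λ¹ − λ*‖² + 2β Σ_{k=1}^∞ η_k). -/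
open RealInnerProductSpace

/-! The η-approximate optimality condition and the gradient inequality for `f` say that `x⁺`
minimizes the ordinary Lagrangian `ℓ(·; μ) = f + g + ⟪μ, A · - b⟫` up to `η` at the updated
multiplier `μ = λ + β (A x⁺ - b)`. Since the augmented Lagrangian dominates it,
`d μ ≥ ℓ(x⁺; μ) - η`, while `d λ* ≤ L_β(x⁺; λ*)`; so `d μ ≤ d λ*` yields
`⟪μ - λ*, A x⁺ - b⟫ ≤ (β/2) ‖A x⁺ - b‖² + η`, which is `‖μ - λ*‖² ≤ ‖λ - λ*‖² + 2βη`.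
Summing these one-step estimates gives the bound. -/

theorem ConvexOn.add_le_of_hasFDerivAt {E : Type*} [NormedAddCommGroup E] [NormedSpace ℝ E]
    {s : Set E} {f : E → ℝ} {f' : E →L[ℝ] ℝ} {x y : E} (hf : ConvexOn ℝ s f)
    (hx : x ∈ s) (hy : y ∈ s) (h : HasFDerivAt f f' x) : f x + f' (y - x) ≤ f y := by
  let ℓ : ℝ →ᵃ[ℝ] E := AffineMap.lineMap x y
  have hconv : ConvexOn ℝ (ℓ ⁻¹' s) (f ∘ ℓ) := hf.comp_affineMap ℓ
  have hderiv : HasDerivAt (f ∘ ℓ) (f' (y - x)) 0 := by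
    have h0 : HasFDerivAt f f' (ℓ 0) := by simpa [ℓ] using h
    exact h0.comp_hasDerivAt (0 : ℝ) AffineMap.hasDerivAt_lineMap
  have hslope := hconv.le_slope_of_hasDerivAt (by simpa [ℓ] using hx) (by simpa [ℓ] using hy)
    one_pos hderiv
  simp only [ℓ, slope_def_field, Function.comp_apply, AffineMap.lineMap_apply_zero,
    AffineMap.lineMap_apply_one, sub_zero, div_one] at hslope
  linarith

theorem le_add_tsum_of_le_add {u c : ℕ → ℝ} (h : ∀ j, u (j + 1) ≤ u j + c j)
    (hc : ∀ j, 0 ≤ c j) (hsum : Summable c) (j : ℕ) : u j ≤ u 0 + ∑' i, c i := by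
  have hpartial : ∀ j, u j ≤ u 0 + ∑ i ∈ Finset.range j, c i := by
    intro j
    induction j with
    | zero => simp
    | succ j ih => rw [Finset.sum_range_succ]; linarith [h j]
  linarith [hpartial j, hsum.sum_le_tsum (Finset.range j) (fun i _ => hc i)]

theorem norm_add_smul_sq_le {F : Type*} [NormedAddCommGroup F] [InnerProductSpace ℝ F]
    {u r : F} {β η : ℝ} (h : ⟪u + β • r, r⟫ ≤ β / 2 * ‖r‖ ^ 2 + η) (hβ : 0 ≤ β) :
    ‖u + β • r‖ ^ 2 ≤ ‖u‖ ^ 2 + 2 * β * η := by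
  have hexpand : ‖u + β • r‖ ^ 2 = ‖u‖ ^ 2 + 2 * β * ⟪u + β • r, r⟫ - β ^ 2 * ‖r‖ ^ 2 := by
    rw [norm_add_sq_real, norm_smul, inner_add_left, real_inner_smul_right, real_inner_smul_left,
      real_inner_self_eq_norm_sq, Real.norm_eq_abs, abs_of_nonneg hβ]
    ring
  rw [hexpand]
  nlinarith

section AugmentedLagrangian

variable {E F : Type*} [NormedAddCommGroup E] [InnerProductSpace ℝ E]
  [NormedAddCommGroup F] [InnerProductSpace ℝ F]
  {A : E →L[ℝ] F} {b : F} {f g : E → ℝ} {β η : ℝ}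

def lagrangian (A : E →L[ℝ] F) (b : F) (f g : E → ℝ) (μ : F) (y : E) : ℝ :=
  f y + g y + ⟪μ, A y - b⟫

theorem lagrangian_le_add_of_approx [CompleteSpace E] [CompleteSpace F] {f' xp : E} {μ : F}
    (hf : ConvexOn ℝ Set.univ f) (hgrad : HasGradientAt f f' xp)
    (happ : ∀ y, ⟪f' + A.adjoint μ, xp - y⟫ + g xp - g y ≤ η) (y : E) :
    lagrangian A b f g μ xp ≤ lagrangian A b f g μ y + η := by
  have hconv : f xp + ⟪f', y - xp⟫ ≤ f y :=
    hf.add_le_of_hasFDerivAt (Set.mem_univ _) (Set.mem_univ _) hgrad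
  have hadj : ⟪A.adjoint μ, xp - y⟫ = ⟪μ, A xp - b⟫ - ⟪μ, A y - b⟫ := by
    rw [ContinuousLinearMap.adjoint_inner_left, ← inner_sub_right, map_sub,
      sub_sub_sub_cancel_right]
  have hflip : ⟪f', xp - y⟫ = -⟪f', y - xp⟫ := by rw [← inner_neg_right, neg_sub]
  have happ_y := happ y
  rw [inner_add_left, hadj, hflip] at happ_y
  unfold lagrangian
  linarith

variable {L : E → F → ℝ} {d : F → ℝ}

theorem inner_sub_residual_le_of_dual_le (hβ : 0 ≤ β)
    (hL : ∀ x lam, L x lam = f x + ⟪lam, A x - b⟫ + β / 2 * ‖A x - b‖ ^ 2 + g x)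
    {μ lamstar : F} (hdμ : d μ ∈ Set.range fun x => L x μ)
    (hdstar : d lamstar ∈ lowerBounds (Set.range fun x => L x lamstar)) (hle : d μ ≤ d lamstar)
    {xp : E} (happ : ∀ y, lagrangian A b f g μ xp ≤ lagrangian A b f g μ y + η) :
    ⟪μ - lamstar, A xp - b⟫ ≤ β / 2 * ‖A xp - b‖ ^ 2 + η := by
  obtain ⟨x₀, hx₀⟩ := hdμ
  have hpen : lagrangian A b f g μ x₀ ≤ L x₀ μ := by
    rw [hL, lagrangian]
    nlinarith [sq_nonneg ‖A x₀ - b‖]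
  have hdual : d lamstar ≤ L xp lamstar := hdstar ⟨xp, rfl⟩
  have happ_x₀ := happ x₀
  rw [hL] at hdual
  rw [inner_sub_left]
  unfold lagrangian at happ_x₀ hpen
  linarith

theorem norm_multiplier_update_sub_sq_le [CompleteSpace E] [CompleteSpace F] (hβ : 0 ≤ β)
    (hL : ∀ x lam, L x lam = f x + ⟪lam, A x - b⟫ + β / 2 * ‖A x - b‖ ^ 2 + g x)
    (hd : ∀ lam, IsLeast (Set.range fun x => L x lam) (d lam))
    {lamstar : F} (hstar : ∀ μ, d μ ≤ d lamstar) (hf : ConvexOn ℝ Set.univ f)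
    {f' xp : E} (hgrad : HasGradientAt f f' xp) {lam : F}
    (happ : ∀ y, ⟪f' + A.adjoint (lam + β • (A xp - b)), xp - y⟫ + g xp - g y ≤ η) :
    ‖lam + β • (A xp - b) - lamstar‖ ^ 2 ≤ ‖lam - lamstar‖ ^ 2 + 2 * β * η := by
  have hinner := inner_sub_residual_le_of_dual_le hβ hL (hd _).1 (hd lamstar).2 (hstar _)
    (lagrangian_le_add_of_approx (b := b) hf hgrad happ)
  rw [show lam + β • (A xp - b) - lamstar = lam - lamstar + β • (A xp - b) by abel] at hinner ⊢
  exact norm_add_smul_sq_le hinner hβ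

end AugmentedLagrangian

theorem ial_dual_iterates_bounded_general
    {n m : ℕ}
    (A : EuclideanSpace ℝ (Fin n) →L[ℝ] EuclideanSpace ℝ (Fin m))
    (b : EuclideanSpace ℝ (Fin m))
    (f g : EuclideanSpace ℝ (Fin n) → ℝ)
    (f' : EuclideanSpace ℝ (Fin n) → EuclideanSpace ℝ (Fin n))
    (hf : ConvexOn ℝ Set.univ f)
    (hf' : ∀ x, HasGradientAt f (f' x) x)
    (β : ℝ) (hβ : 0 < β)
    (L : EuclideanSpace ℝ (Fin n) → EuclideanSpace ℝ (Fin m) → ℝ)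
    (hL : ∀ x lam, L x lam
        = f x + ⟪lam, A x - b⟫ + β / 2 * ‖A x - b‖ ^ 2 + g x)
    (d : EuclideanSpace ℝ (Fin m) → ℝ)
    (hd : ∀ lam, IsLeast (Set.range fun x => L x lam) (d lam))
    (x : ℕ → EuclideanSpace ℝ (Fin n))
    (lam : ℕ → EuclideanSpace ℝ (Fin m))
    (η : ℕ → ℝ)
    (hη : ∀ k, 1 ≤ k → 0 ≤ η k)
    (happrox : ∀ k, 1 ≤ k → ∀ y,
        ⟪f' (x (k + 1)) + A.adjoint (lam k + β • (A (x (k + 1)) - b)), x (k + 1) - y⟫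
          + g (x (k + 1)) - g y ≤ η k)
    (hlam : ∀ k, 1 ≤ k → lam (k + 1) = lam k + β • (A (x (k + 1)) - b))
    (lamstar : EuclideanSpace ℝ (Fin m))
    (hstar : ∀ μ, d μ ≤ d lamstar)
    (hsum : Summable fun k : ℕ => η (k + 1))
    (B : ℝ)
    (hB : B = Real.sqrt (‖lam 1 - lamstar‖ ^ 2 + 2 * β * ∑' k : ℕ, η (k + 1))) :
    ∀ k, 1 ≤ k → ‖lam k - lamstar‖ ≤ B := by
  have hstep : ∀ j : ℕ, ‖lam (j + 1 + 1) - lamstar‖ ^ 2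
      ≤ ‖lam (j + 1) - lamstar‖ ^ 2 + 2 * β * η (j + 1) := fun j => by
    rw [hlam _ j.succ_pos]
    exact norm_multiplier_update_sub_sq_le hβ.le hL hd hstar hf (hf' _) (happrox _ j.succ_pos)
  have hbound := le_add_tsum_of_le_add (u := fun j => ‖lam (j + 1) - lamstar‖ ^ 2) hstep
    (fun j => mul_nonneg (by positivity) (hη _ j.succ_pos)) (hsum.mul_left (2 * β))
  intro k hk
  obtain ⟨j, rfl⟩ := Nat.exists_eq_add_of_le' hk
  rw [hB]
  refine Real.le_sqrt_of_sq_le ?_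
  simpa only [tsum_mul_left] using hbound j

/-- **Lemma 3 (boundedness of dual iterates).**
If the nonnegative tolerance sequence `{η_k}` is summable, then for every `k ≥ 1`:
`‖λ^k − λ*‖ ≤ B`, where `B := √(‖λ¹ − λ*‖² + 2β Σ_{k=1}^∞ η_k)`. -/
theorem ial_dual_iterates_bounded
    {n m : ℕ}
    (A : EuclideanSpace ℝ (Fin n) →L[ℝ] EuclideanSpace ℝ (Fin m))
    (b : EuclideanSpace ℝ (Fin m))
    (f g : EuclideanSpace ℝ (Fin n) → ℝ)
    (f' : EuclideanSpace ℝ (Fin n) → EuclideanSpace ℝ (Fin n))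
    (hf : ConvexOn ℝ Set.univ f)
    (hf' : ∀ x, HasGradientAt f (f' x) x)
    (hg : ConvexOn ℝ Set.univ g)
    (β : ℝ) (hβ : 0 < β)
    (L : EuclideanSpace ℝ (Fin n) → EuclideanSpace ℝ (Fin m) → ℝ)
    (hL : ∀ x lam, L x lam
        = f x + ⟪lam, A x - b⟫ + β / 2 * ‖A x - b‖ ^ 2 + g x)
    (d : EuclideanSpace ℝ (Fin m) → ℝ)
    (hd : ∀ lam, IsLeast (Set.range fun x => L x lam) (d lam))
    (x : ℕ → EuclideanSpace ℝ (Fin n))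
    (lam : ℕ → EuclideanSpace ℝ (Fin m))
    (η : ℕ → ℝ)
    (hη : ∀ k, 1 ≤ k → 0 ≤ η k)
    (happrox : ∀ k, 1 ≤ k → ∀ y,
        ⟪f' (x (k + 1)) + A.adjoint (lam k + β • (A (x (k + 1)) - b)), x (k + 1) - y⟫
          + g (x (k + 1)) - g y ≤ η k)
    (hlam : ∀ k, 1 ≤ k → lam (k + 1) = lam k + β • (A (x (k + 1)) - b))
    (lamstar : EuclideanSpace ℝ (Fin m))
    (hstar : ∀ μ, d μ ≤ d lamstar)
    (hsum : Summable fun k : ℕ => η (k + 1))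
    (B : ℝ)
    (hB : B = Real.sqrt (‖lam 1 - lamstar‖ ^ 2 + 2 * β * ∑' k : ℕ, η (k + 1))) :
    ∀ k, 1 ≤ k → ‖lam k - lamstar‖ ≤ B :=
  ial_dual_iterates_bounded_general A b f g f' hf hf' β hβ L hL d hd x lam η hη happrox hlam lamstar
    hstar hsum B hB
end
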